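/- arXiv:1705.04384 — 2 statements merged into one kernel-verified Lean document; each statement's English description precedes it below -/
import Mathlib

section
/- Let P and H be real symmetric positive definite N × N matrices, let c > 0 be such that vᵀ P v ≥ c · vᵀ H v for every v ∈ ℝ^N, let A be a real symmetric N × N matrix and let A* be any real N × N matrix. Then for every eigenvalue μ in the complex spectrum of P⁻¹ A* there exists a (real) eigenvalue λ of P⁻¹ A such that |λ − μ| ≤ (1 / c) · ‖H^{-1/2} (A − A*) H^{-1/2}‖. -/
/-!
Write `S = P^{1/2}` and `T = H^{1/2}`. Conjugating by `S` turns `P⁻¹ A` into the symmetric matrix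
`B = S⁻¹ A S⁻¹` and `P⁻¹ A*` into `B* = S⁻¹ A* S⁻¹`, without changing spectra. For a Hermitian
`B`, every eigenvalue `μ` of any `B*` lies within `‖B* - B‖` of an eigenvalue of `B`: expanding an
eigenvector `v` of `B*` in an orthonormal eigenbasis of `B` gives
`min_i |λᵢ - μ| ‖v‖ ≤ ‖(B - μ) v‖ = ‖(B - B*) v‖`. Finally `B* - B = Gᴴ F G` with
`F = T⁻¹ (A* - A) T⁻¹` and `G = T S⁻¹`, and the coercivity `c vᵀHv ≤ vᵀPv` says exactly that
`‖G‖² ≤ 1 / c`.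
-/

open scoped Matrix.Norms.L2Operator MatrixOrder ComplexOrder
open Matrix

namespace LinearMap.IsSymmetric

variable {𝕜 E : Type*} [RCLike 𝕜] [NormedAddCommGroup E] [InnerProductSpace 𝕜 E]
  [FiniteDimensional 𝕜 E] {T : E →ₗ[𝕜] E}

theorem norm_apply_sub_smul_sq {n : ℕ} (hT : T.IsSymmetric) (hn : Module.finrank 𝕜 E = n)
    (μ : 𝕜) (v : E) :
    ‖T v - μ • v‖ ^ 2 =
      ∑ i, ‖(hT.eigenvalues hn i : 𝕜) - μ‖ ^ 2 * ‖(hT.eigenvectorBasis hn).repr v i‖ ^ 2 := by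
  rw [← (hT.eigenvectorBasis hn).repr.norm_map, EuclideanSpace.norm_sq_eq]
  refine Finset.sum_congr rfl fun i _ => ?_
  simp [eigenvectorBasis_apply_self_apply, ← sub_mul, norm_mul, mul_pow]

theorem exists_hasEigenvalue_mul_norm_le [Nontrivial E] (hT : T.IsSymmetric) (μ : 𝕜) :
    ∃ l : ℝ, Module.End.HasEigenvalue T l ∧ ∀ v, ‖(l : 𝕜) - μ‖ * ‖v‖ ≤ ‖T v - μ • v‖ := by
  have : Nonempty (Fin (Module.finrank 𝕜 E)) := ⟨⟨0, Module.finrank_pos⟩⟩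
  obtain ⟨i, hi⟩ := Finite.exists_min fun i => ‖(hT.eigenvalues rfl i : 𝕜) - μ‖
  refine ⟨_, hT.hasEigenvalue_eigenvalues rfl i, fun v => ?_⟩
  rw [← sq_le_sq₀ (by positivity) (norm_nonneg _), mul_pow, hT.norm_apply_sub_smul_sq rfl,
    ← (hT.eigenvectorBasis rfl).repr.norm_map, EuclideanSpace.norm_sq_eq, Finset.mul_sum]
  gcongr with j
  exact hi j

end LinearMap.IsSymmetric

theorem EuclideanSpace.norm_sq_eq_norm_sq_re_add_norm_sq_im {n : Type*} [Fintype n]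
    (x : EuclideanSpace ℂ n) :
    ‖x‖ ^ 2 = ‖WithLp.toLp 2 fun i => (x i).re‖ ^ 2 + ‖WithLp.toLp 2 fun i => (x i).im‖ ^ 2 := by
  rw [EuclideanSpace.norm_sq_eq, EuclideanSpace.norm_sq_eq, EuclideanSpace.norm_sq_eq,
    ← Finset.sum_add_distrib]
  refine Finset.sum_congr rfl fun i _ => ?_
  rw [Complex.sq_norm, Complex.normSq_apply, Real.norm_eq_abs, Real.norm_eq_abs, sq_abs, sq_abs,
    sq, sq]

theorem spectrum.map_units_conjugate {R A B : Type*} [CommSemiring R] [Ring A] [Ring B]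
    [Algebra R B] (φ : A →+* B) (u : Aˣ) (a : A) :
    spectrum R (φ (↑u⁻¹ * a * ↑u)) = spectrum R (φ a) := by
  simpa [map_mul] using spectrum.units_conjugate' (R := R) (a := φ a) (u := Units.map φ u)

namespace Matrix

section RealMatrix

variable {m n : Type*} [Fintype n]

theorem re_map_ofReal_mulVec (M : Matrix m n ℝ) (x : n → ℂ) :
    (fun i => ((M.map ((↑) : ℝ → ℂ) *ᵥ x) i).re) = M *ᵥ fun j => (x j).re := by
  ext i
  simp [mulVec, dotProduct, Complex.re_sum]

theorem im_map_ofReal_mulVec (M : Matrix m n ℝ) (x : n → ℂ) :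
    (fun i => ((M.map ((↑) : ℝ → ℂ) *ᵥ x) i).im) = M *ᵥ fun j => (x j).im := by
  ext i
  simp [mulVec, dotProduct, Complex.im_sum]

theorem l2_opNorm_map_ofReal_le [Fintype m] [DecidableEq n] (M : Matrix m n ℝ) :
    ‖M.map ((↑) : ℝ → ℂ)‖ ≤ ‖M‖ := by
  rw [l2_opNorm_def]
  refine ContinuousLinearMap.opNorm_le_bound _ (norm_nonneg M) fun x => ?_
  rw [← sq_le_sq₀ (norm_nonneg _) (by positivity), mul_pow,
    EuclideanSpace.norm_sq_eq_norm_sq_re_add_norm_sq_im,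
    EuclideanSpace.norm_sq_eq_norm_sq_re_add_norm_sq_im x, mul_add]
  simp only [LinearEquiv.trans_apply, LinearMap.coe_toContinuousLinearMap', toLpLin_apply,
    WithLp.ofLp_toLp, re_map_ofReal_mulVec, im_map_ofReal_mulVec, ← mul_pow]
  gcongr <;> exact M.l2_opNorm_mulVec (WithLp.toLp 2 _)

theorem norm_sq_toLp_mulVec (T : Matrix n n ℝ) (z : n → ℝ) :
    ‖WithLp.toLp 2 (T *ᵥ z)‖ ^ 2 = z ⬝ᵥ (Tᵀ * T) *ᵥ z := by
  rw [← mulVec_mulVec, dotProduct_mulVec, vecMul_transpose, EuclideanSpace.norm_sq_eq]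
  simp [dotProduct, sq]

theorem mem_spectrum_of_ofReal_mem_spectrum_map [DecidableEq n] {M : Matrix n n ℝ} {l : ℝ}
    (h : (l : ℂ) ∈ spectrum ℂ (M.map ((↑) : ℝ → ℂ))) : l ∈ spectrum ℝ M :=
  AlgHom.spectrum_apply_subset Complex.ofRealAm.mapMatrix M ((spectrum.algebraMap_mem_iff ℂ).mp h)

end RealMatrix

variable {𝕜 n : Type*} [RCLike 𝕜] [Fintype n] [DecidableEq n]

/-- Bauer–Fike for a Hermitian matrix. -/
theorem IsHermitian.exists_mem_spectrum_norm_sub_le {B Bs : Matrix n n 𝕜} (hB : B.IsHermitian)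
    {μ : 𝕜} (hμ : μ ∈ spectrum 𝕜 Bs) :
    ∃ l : ℝ, (l : 𝕜) ∈ spectrum 𝕜 B ∧ ‖(l : 𝕜) - μ‖ ≤ ‖Bs - B‖ := by
  rw [← spectrum_toLpLin 2, ← Module.End.hasEigenvalue_iff_mem_spectrum] at hμ
  obtain ⟨v, hv⟩ := hμ.exists_hasEigenvector
  have : Nontrivial (EuclideanSpace 𝕜 n) := nontrivial_of_ne v 0 hv.2
  obtain ⟨l, hl, hdist⟩ :=
    (isSymmetric_toEuclideanLin_iff.mpr hB).exists_hasEigenvalue_mul_norm_le μ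
  refine ⟨l, by rwa [← spectrum_toLpLin 2, ← Module.End.hasEigenvalue_iff_mem_spectrum], ?_⟩
  have hBv : toEuclideanLin B v - μ • v = toEuclideanCLM (𝕜 := 𝕜) (n := n) (B - Bs) v := by
    rw [← hv.apply_eq_smul]
    ext1
    simp [toLpLin_apply]
  refine le_of_mul_le_mul_right ?_ (norm_pos_iff.mpr hv.2)
  calc ‖(l : 𝕜) - μ‖ * ‖v‖ ≤ ‖toEuclideanCLM (𝕜 := 𝕜) (n := n) (B - Bs) v‖ := hBv ▸ hdist v
    _ ≤ ‖B - Bs‖ * ‖v‖ := (toEuclideanCLM (𝕜 := 𝕜) (n := n) (B - Bs)).le_opNorm v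
    _ = ‖Bs - B‖ * ‖v‖ := by rw [norm_sub_rev]

theorem IsHermitian.exists_mem_spectrum_real_norm_sub_le {B Bs : Matrix n n ℝ}
    (hB : B.IsHermitian) {μ : ℂ} (hμ : μ ∈ spectrum ℂ (Bs.map ((↑) : ℝ → ℂ))) :
    ∃ l ∈ spectrum ℝ B, ‖(l : ℂ) - μ‖ ≤ ‖Bs - B‖ := by
  have hBc : (B.map ((↑) : ℝ → ℂ)).IsHermitian :=
    hB.map _ fun x => (Complex.conj_ofReal x).symm
  obtain ⟨l, hl, hdist⟩ := hBc.exists_mem_spectrum_norm_sub_le hμ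
  refine ⟨l, mem_spectrum_of_ofReal_mem_spectrum_map hl, hdist.trans ?_⟩
  rw [← Matrix.map_sub _ fun a b => Complex.ofReal_sub a b]
  exact l2_opNorm_map_ofReal_le _

theorem exists_mem_spectrum_inv_mul_norm_sub_le {P S A Astar : Matrix n n ℝ} (hS : IsUnit S)
    (hSH : Sᴴ = S) (hSS : S * S = P) (hA : A.IsHermitian) {μ : ℂ}
    (hμ : μ ∈ spectrum ℂ ((P⁻¹ * Astar).map ((↑) : ℝ → ℂ))) :
    ∃ l ∈ spectrum ℝ (P⁻¹ * A), ‖(l : ℂ) - μ‖ ≤ ‖S⁻¹ * (A - Astar) * S⁻¹‖ := by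
  have hSdet := (isUnit_iff_isUnit_det S).mp hS
  obtain ⟨u, hu⟩ := hS
  have hconj (M : Matrix n n ℝ) :
      P⁻¹ * M = (↑u⁻¹ : Matrix n n ℝ) * (S⁻¹ * M * S⁻¹) * (↑u : Matrix n n ℝ) := by
    rw [coe_units_inv, hu, ← hSS, Matrix.mul_inv_rev]
    simp only [Matrix.mul_assoc, nonsing_inv_mul _ hSdet, Matrix.mul_one]
  have hB : (S⁻¹ * A * S⁻¹).IsHermitian := by
    simpa only [conjTranspose_nonsing_inv, hSH] using isHermitian_conjTranspose_mul_mul S⁻¹ hA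
  have hμ' : μ ∈ spectrum ℂ (Complex.ofRealHom.mapMatrix (S⁻¹ * Astar * S⁻¹)) := by
    rw [← spectrum.map_units_conjugate _ u, ← hconj]
    exact hμ
  obtain ⟨l, hl, hdist⟩ := hB.exists_mem_spectrum_real_norm_sub_le hμ'
  refine ⟨l, by rwa [hconj, spectrum.units_conjugate'], hdist.trans_eq ?_⟩
  rw [← norm_neg]
  congr 1
  noncomm_ring

theorem l2_opNorm_mul_inv_sq_le {S T : Matrix n n 𝕜} (hS : IsUnit S) {c : ℝ} (hc : 0 < c)
    (h : ∀ z, c * ‖WithLp.toLp 2 (T *ᵥ z)‖ ^ 2 ≤ ‖WithLp.toLp 2 (S *ᵥ z)‖ ^ 2) :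
    ‖T * S⁻¹‖ ^ 2 ≤ c⁻¹ := by
  have hSdet := (isUnit_iff_isUnit_det S).mp hS
  have hnorm : ‖T * S⁻¹‖ ≤ √c⁻¹ := by
    refine (toEuclideanCLM (𝕜 := 𝕜) (n := n) (T * S⁻¹)).opNorm_le_bound (Real.sqrt_nonneg _)
      fun y => ?_
    rw [← sq_le_sq₀ (norm_nonneg _) (by positivity), mul_pow, Real.sq_sqrt (by positivity),
      le_inv_mul_iff₀ hc]
    simpa [mulVec_mulVec, mul_nonsing_inv _ hSdet, ← toEuclideanCLM_toLp] using h (S⁻¹ *ᵥ y.ofLp)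
  calc ‖T * S⁻¹‖ ^ 2 ≤ √c⁻¹ ^ 2 := by gcongr
    _ = c⁻¹ := Real.sq_sqrt (by positivity)

theorem l2_opNorm_inv_mul_mul_inv_le {S T : Matrix n n 𝕜} (hS : IsUnit S) (hT : IsUnit T)
    (hSH : Sᴴ = S) (hTH : Tᴴ = T) {c : ℝ} (hc : 0 < c)
    (h : ∀ z, c * ‖WithLp.toLp 2 (T *ᵥ z)‖ ^ 2 ≤ ‖WithLp.toLp 2 (S *ᵥ z)‖ ^ 2)
    (E : Matrix n n 𝕜) : ‖S⁻¹ * E * S⁻¹‖ ≤ c⁻¹ * ‖T⁻¹ * E * T⁻¹‖ := by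
  have hTdet := (isUnit_iff_isUnit_det T).mp hT
  set G := T * S⁻¹
  have hG : S⁻¹ * E * S⁻¹ = Gᴴ * (T⁻¹ * E * T⁻¹) * G := by
    simp only [G, conjTranspose_mul, conjTranspose_nonsing_inv, hSH, hTH, Matrix.mul_assoc,
      mul_nonsing_inv_cancel_left _ _ hTdet, nonsing_inv_mul_cancel_left _ _ hTdet]
  calc ‖S⁻¹ * E * S⁻¹‖ = ‖Gᴴ * (T⁻¹ * E * T⁻¹) * G‖ := by rw [hG]
    _ ≤ ‖Gᴴ‖ * ‖T⁻¹ * E * T⁻¹‖ * ‖G‖ := norm_mul₃_le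
    _ = ‖G‖ ^ 2 * ‖T⁻¹ * E * T⁻¹‖ := by rw [l2_opNorm_conjTranspose]; ring
    _ ≤ c⁻¹ * ‖T⁻¹ * E * T⁻¹‖ := by gcongr; exact l2_opNorm_mul_inv_sq_le hS hc h

theorem PosSemidef.sqrt_eq_eigenvectorUnitary_mul_diagonal {A : Matrix n n 𝕜} (hA : A.PosSemidef) :
    CFC.sqrt A = (hA.1.eigenvectorUnitary : Matrix n n 𝕜) *
      diagonal ((RCLike.ofReal : ℝ → 𝕜) ∘ (√·) ∘ hA.1.eigenvalues) *
      (star hA.1.eigenvectorUnitary : Matrix n n 𝕜) := by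
  rw [CFC.sqrt_eq_real_sqrt A hA.nonneg, cfcₙ_eq_cfc, hA.1.cfc_eq, IsHermitian.cfc,
    Unitary.conjStarAlgAut_apply]

end Matrix

/-- Quantitative inequality from the proof of Proposition 2: if `P` and `H` are symmetric
positive definite with `vᵀPv ≥ c·vᵀHv` for all `v`, `A` is symmetric and `A*` arbitrary,
then every complex eigenvalue `μ` of `P⁻¹A*` is within distance
`(1/c)·‖H^{-1/2}(A - A*)H^{-1/2}‖` of some (real) eigenvalue `λ` of `P⁻¹A`. -/
theorem preconditioned_eigenvalue_perturbation_bound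
    {N : ℕ} (P H A Astar : Matrix (Fin N) (Fin N) ℝ)
    (hP : P.PosDef) (hH : H.PosDef) (hAsymm : Aᵀ = A)
    (c : ℝ) (hc : 0 < c)
    (coer : ∀ v : Fin N → ℝ, c * (v ⬝ᵥ H.mulVec v) ≤ v ⬝ᵥ P.mulVec v) :
    ∀ μ ∈ spectrum ℂ ((P⁻¹ * Astar).map (fun x : ℝ => (x : ℂ))),
      ∃ l ∈ spectrum ℝ (P⁻¹ * A),
        ‖(l : ℂ) - μ‖ ≤
          (1 / c) * ‖((hH.posSemidef.1.eigenvectorUnitary : Matrix (Fin N) (Fin N) ℝ) * diagonal ((RCLike.ofReal : ℝ → ℝ) ∘ (√·) ∘ hH.posSemidef.1.eigenvalues) *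
            (star hH.posSemidef.1.eigenvectorUnitary : Matrix (Fin N) (Fin N) ℝ))⁻¹ * (A - Astar) * ((hH.posSemidef.1.eigenvectorUnitary : Matrix (Fin N) (Fin N) ℝ) * diagonal ((RCLike.ofReal : ℝ → ℝ) ∘ (√·) ∘ hH.posSemidef.1.eigenvalues) *
            (star hH.posSemidef.1.eigenvectorUnitary : Matrix (Fin N) (Fin N) ℝ))⁻¹‖ := by
  intro μ hμ
  rw [← hH.posSemidef.sqrt_eq_eigenvectorUnitary_mul_diagonal]
  set S := CFC.sqrt P
  set T := CFC.sqrt H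
  have hS : IsUnit S := (CFC.isUnit_sqrt_iff P hP.posSemidef.nonneg).mpr hP.isUnit
  have hT : IsUnit T := (CFC.isUnit_sqrt_iff H hH.posSemidef.nonneg).mpr hH.isUnit
  have hSH : Sᴴ = S := IsSelfAdjoint.of_nonneg (CFC.sqrt_nonneg P)
  have hTH : Tᴴ = T := IsSelfAdjoint.of_nonneg (CFC.sqrt_nonneg H)
  have hSS : S * S = P := CFC.sqrt_mul_sqrt_self P hP.posSemidef.nonneg
  have hTT : T * T = H := CFC.sqrt_mul_sqrt_self H hH.posSemidef.nonneg
  obtain ⟨l, hl, hdist⟩ := exists_mem_spectrum_inv_mul_norm_sub_le hS hSH hSS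
    ((conjTranspose_eq_transpose_of_trivial A).trans hAsymm) hμ
  refine ⟨l, hl, hdist.trans ?_⟩
  rw [one_div]
  refine l2_opNorm_inv_mul_mul_inv_le hS hT hSH hTH hc (fun z => ?_) _
  rw [norm_sq_toLp_mulVec, norm_sq_toLp_mulVec, ← conjTranspose_eq_transpose_of_trivial,
    ← conjTranspose_eq_transpose_of_trivial, hSH, hTH, hSS, hTT]
  exact coer z
end

section
/- Let P and H be real symmetric positive definite N × N matrices and let c > 0 be such that vᵀ P v ≥ c · vᵀ H v for every v ∈ ℝ^N. Then for every real N × N matrix E, ‖P^{-1/2} E P^{-1/2}‖ ≤ (1 / c) · ‖H^{-1/2} E H^{-1/2}‖. -/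
/-!
Write `S = P^{1/2}`, `R = H^{1/2}` and `T = R S⁻¹`. Then `S⁻¹ E S⁻¹ = Tᴴ (R⁻¹ E R⁻¹) T`, so the
left-hand side is at most `‖T‖² ‖R⁻¹ E R⁻¹‖`, and coercivity says exactly that
`c ‖R u‖² = c uᵀHu ≤ uᵀPu = ‖S u‖²` for all `u`, i.e. `‖T‖² ≤ 1/c`.
-/

open scoped Matrix.Norms.L2Operator
open Matrix

section
open scoped ComplexOrder

/-- The square root of a positive semidefinite matrix (the Mathlib definition of
December 2024, removed since). -/
noncomputable def Matrix.PosSemidef.sqrt {n 𝕜 : Type*} [Fintype n] [RCLike 𝕜] [DecidableEq n]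
    {A : Matrix n n 𝕜} (hA : A.PosSemidef) : Matrix n n 𝕜 :=
  hA.1.eigenvectorUnitary.1 * diagonal ((↑) ∘ (√·) ∘ hA.1.eigenvalues) *
    (star hA.1.eigenvectorUnitary : Matrix n n 𝕜)

end

namespace Matrix

open WithLp

section Sqrt

open scoped ComplexOrder

variable {n 𝕜 : Type*} [Fintype n] [RCLike 𝕜] [DecidableEq n] {A : Matrix n n 𝕜}

lemma PosSemidef.sqrt_mul_self (hA : A.PosSemidef) : hA.sqrt * hA.sqrt = A := by
  conv_rhs => rw [hA.1.spectral_theorem, Unitary.conjStarAlgAut_apply]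
  simp only [PosSemidef.sqrt, Matrix.mul_assoc]
  rw [← Matrix.mul_assoc (star _), Unitary.coe_star_mul_self, Matrix.one_mul,
    ← Matrix.mul_assoc (diagonal _), diagonal_mul_diagonal]
  congr 3
  ext i
  simp [← RCLike.ofReal_mul, Real.mul_self_sqrt (hA.eigenvalues_nonneg i)]

lemma PosSemidef.isHermitian_sqrt (hA : A.PosSemidef) : hA.sqrt.IsHermitian :=
  isHermitian_mul_mul_conjTranspose _ <| isHermitian_diagonal_iff.2 fun _ => RCLike.conj_ofReal _

lemma PosDef.isUnit_sqrt (hA : A.PosDef) : IsUnit hA.posSemidef.sqrt :=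
  isUnit_of_mul_isUnit_left (hA.posSemidef.sqrt_mul_self ▸ hA.isUnit)

end Sqrt

section L2

variable {𝕜 m n : Type*} [RCLike 𝕜] [Fintype m] [Fintype n] [DecidableEq n]

lemma l2_opNorm_le_of_mulVec {A : Matrix m n 𝕜} {k : ℝ} (hk : 0 ≤ k)
    (h : ∀ x : n → 𝕜, ‖toLp 2 (A *ᵥ x)‖ ≤ k * ‖toLp 2 x‖) : ‖A‖ ≤ k :=
  ContinuousLinearMap.opNorm_le_bound _ hk fun x => h x.ofLp

lemma l2_opNorm_mul_inv_le {R S : Matrix n n 𝕜} (hS : IsUnit S) {k : ℝ} (hk : 0 ≤ k)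
    (h : ∀ u : n → 𝕜, ‖toLp 2 (R *ᵥ u)‖ ≤ k * ‖toLp 2 (S *ᵥ u)‖) : ‖R * S⁻¹‖ ≤ k := by
  refine l2_opNorm_le_of_mulVec hk fun x => ?_
  simpa [mulVec_mulVec, mul_nonsing_inv _ ((isUnit_iff_isUnit_det S).1 hS)] using h (S⁻¹ *ᵥ x)

lemma l2_opNorm_conjTranspose_mul_mul_le (T B : Matrix n n 𝕜) :
    ‖Tᴴ * B * T‖ ≤ ‖T‖ ^ 2 * ‖B‖ :=
  calc ‖Tᴴ * B * T‖ ≤ ‖Tᴴ‖ * ‖B‖ * ‖T‖ :=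
        (l2_opNorm_mul _ _).trans (mul_le_mul_of_nonneg_right (l2_opNorm_mul _ _) (norm_nonneg _))
    _ = ‖T‖ ^ 2 * ‖B‖ := by rw [l2_opNorm_conjTranspose]; ring

end L2

section Real

variable {m n : Type*} [Fintype m] [Fintype n]

lemma norm_toLp_mulVec_sq (A : Matrix m n ℝ) (u : n → ℝ) :
    ‖toLp 2 (A *ᵥ u)‖ ^ 2 = u ⬝ᵥ (Aᵀ * A) *ᵥ u := by
  rw [← real_inner_self_eq_norm_sq, EuclideanSpace.inner_eq_star_dotProduct]
  simp [← mulVec_mulVec, dotProduct_mulVec, vecMul_transpose]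

lemma sq_l2_opNorm_mul_inv_le [DecidableEq n] {R S : Matrix n n ℝ} (hS : IsUnit S) {c : ℝ}
    (hc : 0 < c) (h : ∀ v, c * (v ⬝ᵥ (Rᵀ * R) *ᵥ v) ≤ v ⬝ᵥ (Sᵀ * S) *ᵥ v) :
    ‖R * S⁻¹‖ ^ 2 ≤ 1 / c := by
  have hRS (u : n → ℝ) : ‖toLp 2 (R *ᵥ u)‖ ≤ (√c)⁻¹ * ‖toLp 2 (S *ᵥ u)‖ := by
    rw [le_inv_mul_iff₀ (Real.sqrt_pos.2 hc),
      ← pow_le_pow_iff_left₀ (by positivity) (norm_nonneg _) two_ne_zero, mul_pow,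
      Real.sq_sqrt hc.le, norm_toLp_mulVec_sq, norm_toLp_mulVec_sq]
    exact h u
  calc ‖R * S⁻¹‖ ^ 2 ≤ (√c)⁻¹ ^ 2 :=
        pow_le_pow_left₀ (norm_nonneg _) (l2_opNorm_mul_inv_le hS (by positivity) hRS) 2
    _ = 1 / c := by rw [inv_pow, Real.sq_sqrt hc.le, one_div]

end Real

end Matrix

/-- Comparison inequality from the proofs of Propositions 1 and 2: if `P` and `H` are
symmetric positive definite with `vᵀPv ≥ c·vᵀHv` for every `v`, then for any matrix `E`,
`‖P^{-1/2} E P^{-1/2}‖ ≤ (1/c)·‖H^{-1/2} E H^{-1/2}‖`. -/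
theorem invSqrt_conj_norm_comparison
    {N : ℕ} (P H : Matrix (Fin N) (Fin N) ℝ)
    (hP : P.PosDef) (hH : H.PosDef)
    (c : ℝ) (hc : 0 < c)
    (coer : ∀ v : Fin N → ℝ, c * (v ⬝ᵥ H.mulVec v) ≤ v ⬝ᵥ P.mulVec v)
    (E : Matrix (Fin N) (Fin N) ℝ) :
    ‖(hP.posSemidef.sqrt)⁻¹ * E * (hP.posSemidef.sqrt)⁻¹‖ ≤
      (1 / c) * ‖(hH.posSemidef.sqrt)⁻¹ * E * (hH.posSemidef.sqrt)⁻¹‖ := by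
  set S := hP.posSemidef.sqrt
  set R := hH.posSemidef.sqrt
  have hS : Sᴴ = S := hP.posSemidef.isHermitian_sqrt
  have hR : Rᴴ = R := hH.posSemidef.isHermitian_sqrt
  have hRS : ‖R * S⁻¹‖ ^ 2 ≤ 1 / c := by
    refine sq_l2_opNorm_mul_inv_le hP.isUnit_sqrt hc ?_
    rwa [← conjTranspose_eq_transpose_of_trivial, ← conjTranspose_eq_transpose_of_trivial, hS, hR,
      hP.posSemidef.sqrt_mul_self, hH.posSemidef.sqrt_mul_self]
  have hconj : S⁻¹ * E * S⁻¹ = (R * S⁻¹)ᴴ * (R⁻¹ * E * R⁻¹) * (R * S⁻¹) := by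
    have hRu := (isUnit_iff_isUnit_det R).1 hH.isUnit_sqrt
    rw [conjTranspose_mul, conjTranspose_nonsing_inv, hS, hR]
    simp only [Matrix.mul_assoc, mul_nonsing_inv_cancel_left _ _ hRu,
      nonsing_inv_mul_cancel_left _ _ hRu]
  calc ‖S⁻¹ * E * S⁻¹‖ = ‖(R * S⁻¹)ᴴ * (R⁻¹ * E * R⁻¹) * (R * S⁻¹)‖ := by rw [hconj]
    _ ≤ ‖R * S⁻¹‖ ^ 2 * ‖R⁻¹ * E * R⁻¹‖ := l2_opNorm_conjTranspose_mul_mul_le _ _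
    _ ≤ 1 / c * ‖R⁻¹ * E * R⁻¹‖ := mul_le_mul_of_nonneg_right hRS (norm_nonneg _)
end
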